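/- arXiv:2104.14676 — 3 statements merged into one kernel-verified Lean document; each statement's English description precedes it below -/
import Mathlib

section
/- Fix d ≥ 1 and α ∈ (0,1). The function r(p) = (2/(np)) log(1/α) + (1/(np) + 1/(n(1−p))) d on (0,1) is uniquely minimized at p* = 1 − (√(4d² + 8d log(1/α)) − 2d)/(4 log(1/α)), and p* ∈ (1/2, 1). -/
open Real Set

/-!
Writing `a = √(d + 2 log(1/α))` and `b = √d`, one has `n r(p) = a²/p + b²/(1-p)`, and
`a²/p + b²/(1-p) - (a+b)² = (a(1-p) - bp)² / (p(1-p))`. Hence `r ≥ (a+b)²/n` on `(0,1)`, with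
equality exactly at `p = a/(a+b)`, which is the closed form `p*`; it lies in `(1/2, 1)` since
`0 < b < a`.
-/

section SplitProportion

variable {a b p : ℝ}

theorem sq_div_add_sq_div_one_sub_sub_add_sq (hp0 : p ≠ 0) (hp1 : 1 - p ≠ 0) :
    a ^ 2 / p + b ^ 2 / (1 - p) - (a + b) ^ 2 = (a * (1 - p) - b * p) ^ 2 / (p * (1 - p)) := by
  field_simp
  ring

theorem sq_div_add_sq_div_one_sub_div_add (hab : a + b ≠ 0) :
    a ^ 2 / (a / (a + b)) + b ^ 2 / (1 - a / (a + b)) = (a + b) ^ 2 := by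
  rw [one_sub_div hab, add_sub_cancel_left, div_div_eq_mul_div, div_div_eq_mul_div, sq, sq,
    mul_div_right_comm, mul_div_right_comm (b * b), mul_self_div_self, mul_self_div_self]
  ring

theorem add_sq_lt_sq_div_add_sq_div_one_sub (hab : a + b ≠ 0) (hp : p ∈ Ioo 0 1)
    (hne : p ≠ a / (a + b)) : (a + b) ^ 2 < a ^ 2 / p + b ^ 2 / (1 - p) := by
  obtain ⟨hp0, hp1⟩ := hp
  have h1p : 0 < 1 - p := sub_pos.mpr hp1
  have hgap : a * (1 - p) - b * p ≠ 0 := fun h =>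
    hne (by rw [eq_div_iff hab]; linear_combination -h)
  have hdiff := sq_div_add_sq_div_one_sub_sub_add_sq (a := a) (b := b) hp0.ne' h1p.ne'
  have hgap_pos : 0 < (a * (1 - p) - b * p) ^ 2 / (p * (1 - p)) := by positivity
  linarith

theorem div_add_mem_Ioo_one_half_one (hb : 0 < b) (hba : b < a) :
    a / (a + b) ∈ Ioo (1 / 2 : ℝ) 1 := by
  have hab : 0 < a + b := by linarith
  constructor
  · rw [div_lt_div_iff₀ two_pos hab]
    linarith
  · rw [div_lt_one hab]
    linarith

end SplitProportion

theorem one_sub_sqrt_sub_div_eq {d L : ℝ} (hd : 0 ≤ d) (hL : 0 < L) :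
    1 - (√(4 * d ^ 2 + 8 * d * L) - 2 * d) / (4 * L) = √(d + 2 * L) / (√(d + 2 * L) + √d) := by
  have hb : √d ^ 2 = d := sq_sqrt hd
  have ha : √(d + 2 * L) ^ 2 = d + 2 * L := sq_sqrt (by linarith)
  have hsum : 0 < √(d + 2 * L) + √d := by positivity
  have hprod : √(4 * d ^ 2 + 8 * d * L) = 2 * √d * √(d + 2 * L) := by
    rw [← sqrt_sq (by positivity : 0 ≤ 2 * √d * √(d + 2 * L))]
    congr 1
    rw [mul_pow, mul_pow, hb, ha]
    ring
  rw [hprod, eq_div_iff hsum.ne']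
  field_simp
  linear_combination (-2 * √d) * ha - 2 * √(d + 2 * L) * hb

/-- The expected squared radius r(p) of the split LRT confidence set is uniquely
minimized over split proportions p ∈ (0,1) at
p* = 1 − (√(4d² + 8d log(1/α)) − 2d)/(4 log(1/α)), and p* ∈ (1/2, 1). -/
theorem stmt_5 (d : ℕ) (hd : 1 ≤ d) (α : ℝ) (hα0 : 0 < α) (hα1 : α < 1)
    (n : ℝ) (hn : 0 < n)
    (r : ℝ → ℝ)
    (hr : ∀ p, r p = (2 / (n * p)) * Real.log (1 / α)
        + (1 / (n * p) + 1 / (n * (1 - p))) * d)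
    (pstar : ℝ)
    (hpstar : pstar = 1 - (Real.sqrt (4 * (d : ℝ) ^ 2 + 8 * d * Real.log (1 / α)) - 2 * d)
        / (4 * Real.log (1 / α))) :
    pstar ∈ Ioo (1 / 2 : ℝ) 1 ∧
      ∀ p ∈ Ioo (0 : ℝ) 1, p ≠ pstar → r pstar < r p := by
  set L := log (1 / α)
  have hL : 0 < L := log_pos ((one_lt_div hα0).mpr hα1)
  have hd0 : (0 : ℝ) < d := by exact_mod_cast hd
  set a := √(d + 2 * L)
  set b := √(d : ℝ)
  have hb : 0 < b := sqrt_pos.mpr hd0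
  have hba : b < a := sqrt_lt_sqrt hd0.le (by linarith)
  have hab : a + b ≠ 0 := by positivity
  have hr' : ∀ p, r p = (a ^ 2 / p + b ^ 2 / (1 - p)) / n := fun p => by
    rw [hr, sq_sqrt (by positivity), sq_sqrt hd0.le]
    field_simp
    ring
  rw [hpstar, one_sub_sqrt_sub_div_eq hd0.le hL]
  refine ⟨div_add_mem_Ioo_one_half_one hb hba, fun p hp hne => ?_⟩
  rw [hr', hr', sq_div_add_sq_div_one_sub_div_add hab]
  exact div_lt_div_of_pos_right (add_sq_lt_sq_div_add_sq_div_one_sub hab hp hne) hn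
end

section
/- Let a, b, θ ∈ ℝ^d, let n > 0, and suppose exp(−(n/4)‖a − b‖² + (n/4)‖(a+b)/2 − θ‖²) is the split statistic at center (a+b)/2. Then exp(−(n/4)‖a−b‖² + (n/4)‖(a+b)/2 − θ‖²) ≤ (1/2)[exp(−(n/4)‖a−b‖² + (n/4)‖a−θ‖²) + exp(−(n/4)‖a−b‖² + (n/4)‖b−θ‖²)], with equality if and only if a = b. -/
open Real

lemma key_ineq (c K P Q : ℝ) (hc : 0 < c) (hK : 0 ≤ K) :
    Real.exp (-c * K + c * ((P + Q) / 2 - K / 4))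
      ≤ (1 / 2) * (Real.exp (-c * K + c * P) + Real.exp (-c * K + c * Q)) ∧
    (Real.exp (-c * K + c * ((P + Q) / 2 - K / 4))
      = (1 / 2) * (Real.exp (-c * K + c * P) + Real.exp (-c * K + c * Q)) → K = 0) := by
  set E := Real.exp (-c * K) with hE
  set x := Real.exp (c * P / 2) with hx
  set y := Real.exp (c * Q / 2) with hy
  set t := Real.exp (-(c * K / 4)) with ht
  have hEpos : 0 < E := Real.exp_pos _
  have hxpos : 0 < x := Real.exp_pos _
  have hypos : 0 < y := Real.exp_pos _
  have htpos : 0 < t := Real.exp_pos _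
  have hL : Real.exp (-c * K + c * ((P + Q) / 2 - K / 4)) = E * x * y * t := by
    rw [hE, hx, hy, ht, ← Real.exp_add, ← Real.exp_add, ← Real.exp_add]; ring_nf
  have hR1 : Real.exp (-c * K + c * P) = E * x ^ 2 := by
    rw [hE, hx, ← Real.exp_nat_mul, ← Real.exp_add]; ring_nf
  have hR2 : Real.exp (-c * K + c * Q) = E * y ^ 2 := by
    rw [hE, hy, ← Real.exp_nat_mul, ← Real.exp_add]; ring_nf
  have ht1 : t ≤ 1 := by
    rw [ht]
    apply Real.exp_le_one_iff.mpr
    nlinarith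
  have hxy : x * y ≤ (x ^ 2 + y ^ 2) / 2 := by nlinarith [sq_nonneg (x - y)]
  constructor
  · rw [hL, hR1, hR2]
    calc E * x * y * t ≤ E * x * y * 1 := by
          apply mul_le_mul_of_nonneg_left ht1; positivity
      _ = E * (x * y) := by ring
      _ ≤ E * ((x ^ 2 + y ^ 2) / 2) := by
          apply mul_le_mul_of_nonneg_left hxy hEpos.le
      _ = 1 / 2 * (E * x ^ 2 + E * y ^ 2) := by ring
  · intro heq
    by_contra hK0
    have hKpos : 0 < K := lt_of_le_of_ne hK (Ne.symm hK0)
    have ht1' : t < 1 := by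
      rw [ht]; apply Real.exp_lt_one_iff.mpr; nlinarith
    rw [hL, hR1, hR2] at heq
    nlinarith [mul_pos (mul_pos hEpos hxpos) hypos]

/-- The split statistic at the recentered point (a+b)/2 is at most the average of the
split statistics at a and b, with equality iff a = b. -/
theorem stmt_7 (d : ℕ) (n : ℝ) (hn : 0 < n) (a b θ : EuclideanSpace ℝ (Fin d)) :
    Real.exp (-(n / 4) * ‖a - b‖ ^ 2 + (n / 4) * ‖((1 : ℝ) / 2) • (a + b) - θ‖ ^ 2)
        ≤ (1 / 2) * (Real.exp (-(n / 4) * ‖a - b‖ ^ 2 + (n / 4) * ‖a - θ‖ ^ 2)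
            + Real.exp (-(n / 4) * ‖a - b‖ ^ 2 + (n / 4) * ‖b - θ‖ ^ 2)) ∧
      (Real.exp (-(n / 4) * ‖a - b‖ ^ 2 + (n / 4) * ‖((1 : ℝ) / 2) • (a + b) - θ‖ ^ 2)
          = (1 / 2) * (Real.exp (-(n / 4) * ‖a - b‖ ^ 2 + (n / 4) * ‖a - θ‖ ^ 2)
              + Real.exp (-(n / 4) * ‖a - b‖ ^ 2 + (n / 4) * ‖b - θ‖ ^ 2)) ↔ a = b) := by
  have hc : (0:ℝ) < n / 4 := by linarith
  have hpar : ‖(a - θ) + (b - θ)‖ ^ 2 + ‖(a - θ) - (b - θ)‖ ^ 2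
      = 2 * (‖a - θ‖ ^ 2 + ‖b - θ‖ ^ 2) := by
    have := parallelogram_law_with_norm ℝ (a - θ) (b - θ)
    simpa [sq] using this
  have hab : (a - θ) - (b - θ) = a - b := by abel
  have hmid : ((1 : ℝ) / 2) • (a + b) - θ = ((1 : ℝ) / 2) • ((a - θ) + (b - θ)) := by
    module
  have hmidn : ‖((1 : ℝ) / 2) • (a + b) - θ‖ ^ 2
      = (‖a - θ‖ ^ 2 + ‖b - θ‖ ^ 2) / 2 - ‖a - b‖ ^ 2 / 4 := by
    rw [hmid, norm_smul, Real.norm_eq_abs, abs_of_pos (by norm_num : (0:ℝ) < 1/2)]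
    rw [hab] at hpar
    nlinarith [hpar]
  rw [hmidn]
  have key := key_ineq (n / 4) (‖a - b‖ ^ 2) (‖a - θ‖ ^ 2) (‖b - θ‖ ^ 2) hc (by positivity)
  refine ⟨key.1, ⟨fun h => ?_, fun h => ?_⟩⟩
  · have := key.2 h
    have : ‖a - b‖ = 0 := by nlinarith [norm_nonneg (a - b)]
    have : a - b = 0 := norm_eq_zero.mp this
    linear_combination (norm := module) this
  · subst h
    simp
    ring
end

section
/- Let θ̂ ∈ ℝ^d with ‖θ̂‖ > 1, let u = θ̂/‖θ̂‖, and let P₀ be the convex hull of the set of N(θ, I_d) densities with 1/2 ≤ ‖θ‖ ≤ 1. Then for every p₀ ∈ P₀, KL(p_{θ̂} ‖ p₀) ≥ KL(p_{θ̂} ‖ p_u); i.e., p_u achieves the infimum of the KL divergence from p_{θ̂} over P₀. -/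
open Real MeasureTheory Finset

/-- The N(μ, I_d) density on ℝ^d. -/
noncomputable def gaussPDF (d : ℕ) (μ y : Fin d → ℝ) : ℝ :=
  (2 * Real.pi) ^ (-(d : ℝ) / 2) * Real.exp (-(∑ j, (y j - μ j) ^ 2) / 2)

lemma gaussPDF_pos (d : ℕ) (μ y : Fin d → ℝ) : 0 < gaussPDF d μ y := by
  unfold gaussPDF; positivity

noncomputable def g1 (a : ℝ) (t : ℝ) : ℝ :=
  (2 * Real.pi) ^ (-(1:ℝ) / 2) * Real.exp (-(t - a) ^ 2 / 2)

lemma gauss_prod (d : ℕ) (μ y : Fin d → ℝ) :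
    gaussPDF d μ y = ∏ j, g1 (μ j) (y j) := by
  unfold gaussPDF g1
  rw [Finset.prod_mul_distrib, Finset.prod_const, ← Real.exp_sum]
  congr 1
  · rw [← Real.rpow_natCast ((2*Real.pi) ^ (-(1:ℝ)/2)), ← Real.rpow_mul (by positivity)]
    congr 1
    simp [Finset.card_univ]
    ring
  · congr 1
    rw [← Finset.sum_div, ← Finset.sum_neg_distrib]

lemma g1_integrable (a : ℝ) : Integrable (g1 a) := by
  have h : Integrable (fun t : ℝ => Real.exp (-(2⁻¹ : ℝ) * t ^ 2)) :=
    integrable_exp_neg_mul_sq (by norm_num)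
  have h2 := (h.comp_sub_right a).const_mul ((2 * Real.pi) ^ (-(1:ℝ) / 2))
  have he : g1 a = fun t => (2 * Real.pi) ^ (-(1:ℝ) / 2) * Real.exp (-(2⁻¹:ℝ) * (t - a) ^ 2) := by
    funext t; unfold g1; congr 1; ring
  rw [he]; exact h2

lemma g1_sq_integrable (a c : ℝ) :
    Integrable (fun t : ℝ => g1 a t * (t - c) ^ 2) := by
  have hg : Integrable (fun t : ℝ =>
      (2 * Real.pi) ^ (-(1:ℝ) / 2) * ((8 + 2 * (a - c) ^ 2) * Real.exp (-(4⁻¹:ℝ) * (t - a) ^ 2))) := by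
    have h : Integrable (fun t : ℝ => Real.exp (-(4⁻¹ : ℝ) * t ^ 2)) :=
      integrable_exp_neg_mul_sq (by norm_num)
    exact ((h.comp_sub_right a).const_mul _).const_mul _
  refine hg.mono' ?_ (Filter.Eventually.of_forall fun t => ?_)
  · apply Continuous.aestronglyMeasurable
    unfold g1
    exact (continuous_const.mul (Real.continuous_exp.comp
      (((continuous_id.sub continuous_const).pow 2).neg.div_const 2))).mul
      ((continuous_id.sub continuous_const).pow 2)
  · have h0 : (0:ℝ) ≤ g1 a t * (t - c) ^ 2 := by unfold g1; positivity
    rw [Real.norm_eq_abs, abs_of_nonneg h0]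
    unfold g1
    rw [mul_assoc]
    apply mul_le_mul_of_nonneg_left _ (by positivity)
    -- exp(-(t-a)^2/2) * (t-c)^2 ≤ (8 + 2(a-c)^2) * exp(-(t-a)^2/4)
    set s := (t - a) ^ 2 with hs
    have hsnn : 0 ≤ s := sq_nonneg _
    have h1 : (t - c) ^ 2 ≤ 2 * s + 2 * (a - c) ^ 2 := by rw [hs]; nlinarith [sq_nonneg ((t-a) - (a-c))]
    have h2 : Real.exp (-s / 2) = Real.exp (-(4⁻¹:ℝ) * s) * Real.exp (-(4⁻¹:ℝ) * s) := by
      rw [← Real.exp_add]; congr 1; ring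
    have h3 : s * Real.exp (-(4⁻¹:ℝ) * s) ≤ 4 := by
      have := Real.add_one_le_exp ((4⁻¹:ℝ) * s)
      have hepos := Real.exp_pos (-(4⁻¹:ℝ) * s)
      have hmul : Real.exp ((4⁻¹:ℝ) * s) * Real.exp (-(4⁻¹:ℝ) * s) = 1 := by
        rw [← Real.exp_add]; simp
      nlinarith
    have h4 : Real.exp (-(4⁻¹:ℝ) * s) ≤ 1 := by
      rw [Real.exp_le_one_iff]; nlinarith
    have hep := Real.exp_pos (-(4⁻¹:ℝ) * s)
    calc Real.exp (-s / 2) * (t - c) ^ 2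
        ≤ Real.exp (-s / 2) * (2 * s + 2 * (a - c) ^ 2) := by
          apply mul_le_mul_of_nonneg_left h1 (Real.exp_pos _).le
      _ = 2 * (s * Real.exp (-(4⁻¹:ℝ) * s)) * Real.exp (-(4⁻¹:ℝ) * s)
            + 2 * (a - c) ^ 2 * Real.exp (-s / 2) := by rw [h2]; ring
      _ ≤ 2 * 4 * Real.exp (-(4⁻¹:ℝ) * s) + 2 * (a - c) ^ 2 * Real.exp (-(4⁻¹:ℝ) * s) := by
          apply add_le_add
          · apply mul_le_mul_of_nonneg_right _ hep.le
            nlinarith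
          · apply mul_le_mul_of_nonneg_left _ (by positivity)
            rw [h2]
            nlinarith
      _ = (8 + 2 * (a - c) ^ 2) * Real.exp (-(4⁻¹:ℝ) * s) := by ring

lemma gauss_integrable (d : ℕ) (μ : Fin d → ℝ) : Integrable (gaussPDF d μ) := by
  have : (gaussPDF d μ) = fun y : Fin d → ℝ => ∏ j, g1 (μ j) (y j) := by
    funext y; exact gauss_prod d μ y
  rw [this]
  exact Integrable.fintype_prod fun j => g1_integrable (μ j)

lemma gauss_moment (d : ℕ) (μ ν : Fin d → ℝ) :
    Integrable (fun y : Fin d → ℝ => gaussPDF d μ y * ∑ j, (y j - ν j) ^ 2) := by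
  have hrw : (fun y : Fin d → ℝ => gaussPDF d μ y * ∑ j, (y j - ν j) ^ 2)
      = fun y => ∑ i, (gaussPDF d μ y * (y i - ν i) ^ 2) := by
    funext y; rw [Finset.mul_sum]
  rw [hrw]
  apply integrable_finset_sum
  intro i _
  have hrw2 : (fun y : Fin d → ℝ => gaussPDF d μ y * (y i - ν i) ^ 2)
      = fun y => ∏ j, (g1 (μ j) (y j) * (if j = i then (y j - ν j) ^ 2 else 1)) := by
    funext y
    rw [Finset.prod_mul_distrib, Finset.prod_ite_eq' Finset.univ i
      (fun j => (y j - ν j) ^ 2)]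
    simp [gauss_prod d μ y]
  rw [hrw2]
  refine Integrable.fintype_prod
    (f := fun j t => g1 (μ j) t * (if j = i then (t - ν j) ^ 2 else 1)) (fun j => ?_)
  by_cases h : j = i
  · subst h
    simpa using g1_sq_integrable (μ j) (ν j)
  · simpa [h] using g1_integrable (μ j)

lemma gauss_integral_const (d : ℕ) (μ ν : Fin d → ℝ) :
    ∫ y, gaussPDF d μ y = ∫ y, gaussPDF d ν y := by
  have h : ∀ y : Fin d → ℝ, gaussPDF d μ y = gaussPDF d ν (y + (ν - μ)) := by
    intro y
    unfold gaussPDF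
    rw [show (∑ j, ((y + (ν - μ)) j - ν j) ^ 2) = ∑ j, (y j - μ j) ^ 2 from
      Finset.sum_congr rfl fun j _ => by simp only [Pi.add_apply, Pi.sub_apply]; ring]
  simp_rw [h]
  exact integral_add_right_eq_self (fun y => gaussPDF d ν y) (ν - μ)

lemma gauss_mul_div (d : ℕ) (a b v : Fin d → ℝ) (y : Fin d → ℝ) :
    gaussPDF d a y * gaussPDF d b y / gaussPDF d v y
      = Real.exp (-(∑ j, (a j ^ 2 + b j ^ 2 - v j ^ 2 - (a j + b j - v j) ^ 2)) / 2)
        * gaussPDF d (fun j => a j + b j - v j) y := by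
  have hv := gaussPDF_pos d v y
  rw [div_eq_iff hv.ne']
  unfold gaussPDF
  have hs : (∑ j, (y j - a j) ^ 2) + (∑ j, (y j - b j) ^ 2)
      = (∑ j, (a j ^ 2 + b j ^ 2 - v j ^ 2 - (a j + b j - v j) ^ 2))
        + ((∑ j, (y j - (a j + b j - v j)) ^ 2) + (∑ j, (y j - v j) ^ 2)) := by
    rw [← Finset.sum_add_distrib, ← Finset.sum_add_distrib, ← Finset.sum_add_distrib]
    exact Finset.sum_congr rfl fun j _ => by ring
  have hexp : Real.exp (-(∑ j, (y j - a j) ^ 2) / 2) * Real.exp (-(∑ j, (y j - b j) ^ 2) / 2)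
      = Real.exp (-(∑ j, (a j ^ 2 + b j ^ 2 - v j ^ 2 - (a j + b j - v j) ^ 2)) / 2)
        * (Real.exp (-(∑ j, (y j - (a j + b j - v j)) ^ 2) / 2)
          * Real.exp (-(∑ j, (y j - v j) ^ 2) / 2)) := by
    rw [← Real.exp_add, ← Real.exp_add, ← Real.exp_add]
    congr 1
    linarith
  set A := (2 * Real.pi) ^ (-(d:ℝ) / 2)
  calc A * Real.exp (-(∑ j, (y j - a j) ^ 2) / 2) * (A * Real.exp (-(∑ j, (y j - b j) ^ 2) / 2))
      = A * A * (Real.exp (-(∑ j, (y j - a j) ^ 2) / 2) * Real.exp (-(∑ j, (y j - b j) ^ 2) / 2)) := by ring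
    _ = A * A * (Real.exp (-(∑ j, (a j ^ 2 + b j ^ 2 - v j ^ 2 - (a j + b j - v j) ^ 2)) / 2)
        * (Real.exp (-(∑ j, (y j - (a j + b j - v j)) ^ 2) / 2)
          * Real.exp (-(∑ j, (y j - v j) ^ 2) / 2))) := by rw [hexp]
    _ = Real.exp (-(∑ j, (a j ^ 2 + b j ^ 2 - v j ^ 2 - (a j + b j - v j) ^ 2)) / 2)
        * (A * Real.exp (-(∑ j, (y j - (a j + b j - v j)) ^ 2) / 2))
        * (A * Real.exp (-(∑ j, (y j - v j) ^ 2) / 2)) := by ring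

lemma gauss_continuous (d : ℕ) (μ : Fin d → ℝ) : Continuous (gaussPDF d μ) := by
  unfold gaussPDF
  exact continuous_const.mul (Real.continuous_exp.comp
    ((continuous_finset_sum _ fun j _ => ((continuous_apply j).sub continuous_const).pow 2).neg.div_const 2))

lemma gauss_log (d : ℕ) (μ y : Fin d → ℝ) :
    Real.log (gaussPDF d μ y)
      = (-(d:ℝ) / 2) * Real.log (2 * Real.pi) - (∑ j, (y j - μ j) ^ 2) / 2 := by
  unfold gaussPDF
  rw [Real.log_mul (by positivity) (Real.exp_ne_zero _), Real.log_rpow (by positivity),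
    Real.log_exp]
  ring

lemma gauss_le (d : ℕ) (μ y : Fin d → ℝ) :
    gaussPDF d μ y ≤ (2 * Real.pi) ^ (-(d:ℝ) / 2) := by
  unfold gaussPDF
  apply mul_le_of_le_one_right (by positivity)
  rw [Real.exp_le_one_iff]
  have h : (0:ℝ) ≤ ∑ j, (y j - μ j) ^ 2 := Finset.sum_nonneg fun j _ => sq_nonneg _
  linarith

lemma c_expand {d : ℕ} (θhat u θk : Fin d → ℝ) (r : ℝ) (hθu : ∀ j, θhat j = r * u j) :
    ∑ j, (θhat j ^ 2 + θk j ^ 2 - u j ^ 2 - (θhat j + θk j - u j) ^ 2)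
      = (2 * r - 2) * (∑ j, u j ^ 2) + (2 - 2 * r) * ∑ j, θk j * u j := by
  rw [Finset.mul_sum, Finset.mul_sum, ← Finset.sum_add_distrib]
  exact Finset.sum_congr rfl fun j _ => by rw [hθu j]; ring

/-- The reverse information projection of p_{θ̂} (with ‖θ̂‖ > 1) onto the convex hull of
the doughnut null {N(θ, I_d) : 1/2 ≤ ‖θ‖ ≤ 1} is p_{θ̂/‖θ̂‖}: every finite mixture
p₀ = ∑ w_k p_{θ_k} from the null satisfies KL(p_{θ̂} ‖ p₀) ≥ KL(p_{θ̂} ‖ p_u). -/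
theorem stmt_17 (d : ℕ) (θhat : Fin d → ℝ)
    (hθhat : 1 < Real.sqrt (∑ j, θhat j ^ 2))
    (u : Fin d → ℝ) (hu : u = (Real.sqrt (∑ j, θhat j ^ 2))⁻¹ • θhat)
    (K : ℕ) (hK : 1 ≤ K) (w : Fin K → ℝ) (hw : ∀ k, 0 < w k) (hwsum : ∑ k, w k = 1)
    (θs : Fin K → Fin d → ℝ)
    (hθs : ∀ k, 1 / 2 ≤ Real.sqrt (∑ j, θs k j ^ 2) ∧ Real.sqrt (∑ j, θs k j ^ 2) ≤ 1) :
    ∫ y : Fin d → ℝ,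
        gaussPDF d θhat y * Real.log (gaussPDF d θhat y / gaussPDF d u y)
      ≤ ∫ y : Fin d → ℝ,
          gaussPDF d θhat y *
            Real.log (gaussPDF d θhat y / ∑ k, w k * gaussPDF d (θs k) y) := by
  -- proof
  -- basic geometry
  have hrpos : (0:ℝ) < Real.sqrt (∑ j, θhat j ^ 2) := lt_trans one_pos hθhat
  have hsum : ∑ j, θhat j ^ 2 = (Real.sqrt (∑ j, θhat j ^ 2)) ^ 2 :=
    (Real.sq_sqrt (Finset.sum_nonneg fun j _ => sq_nonneg _)).symm
  have hθu : ∀ j, θhat j = (Real.sqrt (∑ j, θhat j ^ 2)) * u j := by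
    intro j
    rw [hu]
    simp only [Pi.smul_apply, smul_eq_mul]
    rw [← mul_assoc, mul_inv_cancel₀ hrpos.ne', one_mul]
  have husq : ∑ j, u j ^ 2 = 1 := by
    rw [hu]
    simp only [Pi.smul_apply, smul_eq_mul, mul_pow, ← Finset.mul_sum]
    have hSpos : 0 < ∑ j, θhat j ^ 2 := by rw [hsum]; positivity
    rw [inv_pow, ← hsum, inv_mul_cancel₀ hSpos.ne']
  -- abbreviations (definitionally transparent)
  have hmixpos : ∀ y : Fin d → ℝ, 0 < ∑ k, w k * gaussPDF d (θs k) y := fun y =>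
    Finset.sum_pos (fun k _ => mul_pos (hw k) (gaussPDF_pos d (θs k) y))
      ⟨⟨0, hK⟩, Finset.mem_univ _⟩
  -- the per-component constants
  have hcnn : ∀ k, 0 ≤ ∑ j, (θhat j ^ 2 + θs k j ^ 2 - u j ^ 2 - (θhat j + θs k j - u j) ^ 2) := by
    intro k
    rw [c_expand θhat u (θs k) _ hθu, husq]
    have ht : (∑ j, θs k j * u j) ≤ 1 := by
      calc ∑ j, θs k j * u j
          ≤ Real.sqrt (∑ j, θs k j ^ 2) * Real.sqrt (∑ j, u j ^ 2) :=
            Real.sum_mul_le_sqrt_mul_sqrt _ _ _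
        _ ≤ 1 := by rw [husq, Real.sqrt_one, mul_one]; exact (hθs k).2
    nlinarith [hθhat, ht]
  have hkey : ∀ (k : Fin K) (y : Fin d → ℝ),
      gaussPDF d θhat y * gaussPDF d (θs k) y / gaussPDF d u y
        = Real.exp (-(∑ j, (θhat j ^ 2 + θs k j ^ 2 - u j ^ 2 - (θhat j + θs k j - u j) ^ 2)) / 2)
            * gaussPDF d (fun j => θhat j + θs k j - u j) y :=
    fun k y => gauss_mul_div d θhat (θs k) u y
  set k0 : Fin K := ⟨0, hK⟩ with hk0
  have hwk0 : w k0 ≤ 1 := by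
    rw [← hwsum]
    exact Finset.single_le_sum (fun k _ => (hw k).le) (Finset.mem_univ k0)
  have hlogw : Real.log (w k0) ≤ 0 := Real.log_nonpos (hw k0).le hwk0
  -- integrability of the LHS integrand
  have hAeq : ∀ y : Fin d → ℝ,
      gaussPDF d θhat y * Real.log (gaussPDF d θhat y / gaussPDF d u y)
        = (gaussPDF d θhat y * ∑ j, (y j - u j) ^ 2
            - gaussPDF d θhat y * ∑ j, (y j - θhat j) ^ 2) / 2 := by
    intro y
    rw [Real.log_div (gaussPDF_pos d θhat y).ne' (gaussPDF_pos d u y).ne',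
      gauss_log, gauss_log]
    ring
  have intA : Integrable (fun y : Fin d → ℝ =>
      gaussPDF d θhat y * Real.log (gaussPDF d θhat y / gaussPDF d u y)) := by
    refine (((gauss_moment d θhat u).sub (gauss_moment d θhat θhat)).div_const 2).congr
      (Filter.Eventually.of_forall fun y => (hAeq y).symm)
  -- bounds on log of the mixture
  have hmixub : ∀ y : Fin d → ℝ, Real.log (∑ k, w k * gaussPDF d (θs k) y)
      ≤ (-(d:ℝ) / 2) * Real.log (2 * Real.pi) := by
    intro y
    have h1 : (∑ k, w k * gaussPDF d (θs k) y) ≤ (2 * Real.pi) ^ (-(d:ℝ) / 2) := by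
      calc ∑ k, w k * gaussPDF d (θs k) y
          ≤ ∑ k, w k * (2 * Real.pi) ^ (-(d:ℝ) / 2) :=
            Finset.sum_le_sum fun k _ =>
              mul_le_mul_of_nonneg_left (gauss_le d (θs k) y) (hw k).le
        _ = (2 * Real.pi) ^ (-(d:ℝ) / 2) := by rw [← Finset.sum_mul, hwsum, one_mul]
    calc Real.log (∑ k, w k * gaussPDF d (θs k) y)
        ≤ Real.log ((2 * Real.pi) ^ (-(d:ℝ) / 2)) := Real.log_le_log (hmixpos y) h1
      _ = (-(d:ℝ) / 2) * Real.log (2 * Real.pi) := Real.log_rpow (by positivity) _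
  have hmixlb : ∀ y : Fin d → ℝ,
      Real.log (w k0) + ((-(d:ℝ) / 2) * Real.log (2 * Real.pi) - (∑ j, (y j - θs k0 j) ^ 2) / 2)
        ≤ Real.log (∑ k, w k * gaussPDF d (θs k) y) := by
    intro y
    have h1 : w k0 * gaussPDF d (θs k0) y ≤ ∑ k, w k * gaussPDF d (θs k) y :=
      Finset.single_le_sum (fun k _ => (mul_pos (hw k) (gaussPDF_pos d (θs k) y)).le)
        (Finset.mem_univ k0)
    calc Real.log (w k0) + ((-(d:ℝ) / 2) * Real.log (2 * Real.pi) - (∑ j, (y j - θs k0 j) ^ 2) / 2)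
        = Real.log (w k0 * gaussPDF d (θs k0) y) := by
          rw [Real.log_mul (hw k0).ne' (gaussPDF_pos d (θs k0) y).ne', gauss_log]
      _ ≤ Real.log (∑ k, w k * gaussPDF d (θs k) y) :=
          Real.log_le_log (mul_pos (hw k0) (gaussPDF_pos d (θs k0) y)) h1
  -- integrability of the RHS integrand
  have hBbound : ∀ y : Fin d → ℝ,
      ‖gaussPDF d θhat y * Real.log (gaussPDF d θhat y / ∑ k, w k * gaussPDF d (θs k) y)‖
        ≤ gaussPDF d θhat y * (-Real.log (w k0))
          + (gaussPDF d θhat y * ∑ j, (y j - θs k0 j) ^ 2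
              + gaussPDF d θhat y * ∑ j, (y j - θhat j) ^ 2) / 2 := by
    intro y
    have hp := gaussPDF_pos d θhat y
    have hM := hmixpos y
    have hS0 : (0:ℝ) ≤ ∑ j, (y j - θs k0 j) ^ 2 := Finset.sum_nonneg fun j _ => sq_nonneg _
    have hS1 : (0:ℝ) ≤ ∑ j, (y j - θhat j) ^ 2 := Finset.sum_nonneg fun j _ => sq_nonneg _
    have hld : Real.log (gaussPDF d θhat y / ∑ k, w k * gaussPDF d (θs k) y)
        = Real.log (gaussPDF d θhat y) - Real.log (∑ k, w k * gaussPDF d (θs k) y) :=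
      Real.log_div hp.ne' hM.ne'
    have habs : |Real.log (gaussPDF d θhat y / ∑ k, w k * gaussPDF d (θs k) y)|
        ≤ -Real.log (w k0) + ((∑ j, (y j - θs k0 j) ^ 2) + ∑ j, (y j - θhat j) ^ 2) / 2 := by
      rw [hld, abs_le]
      constructor
      · have := hmixub y
        rw [gauss_log]
        have hlb := hmixlb y
        linarith
      · have := hmixlb y
        rw [gauss_log]
        have hub := hmixub y
        linarith
    rw [Real.norm_eq_abs, abs_mul, abs_of_nonneg hp.le]
    calc gaussPDF d θhat y * |Real.log (gaussPDF d θhat y / ∑ k, w k * gaussPDF d (θs k) y)|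
        ≤ gaussPDF d θhat y
            * (-Real.log (w k0) + ((∑ j, (y j - θs k0 j) ^ 2) + ∑ j, (y j - θhat j) ^ 2) / 2) :=
          mul_le_mul_of_nonneg_left habs hp.le
      _ = gaussPDF d θhat y * (-Real.log (w k0))
          + (gaussPDF d θhat y * ∑ j, (y j - θs k0 j) ^ 2
              + gaussPDF d θhat y * ∑ j, (y j - θhat j) ^ 2) / 2 := by ring
  have hmixcont : Continuous (fun y : Fin d → ℝ => ∑ k, w k * gaussPDF d (θs k) y) :=
    continuous_finset_sum _ fun k _ => continuous_const.mul (gauss_continuous d (θs k))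
  have intB : Integrable (fun y : Fin d → ℝ =>
      gaussPDF d θhat y * Real.log (gaussPDF d θhat y / ∑ k, w k * gaussPDF d (θs k) y)) := by
    refine Integrable.mono'
      (((gauss_integrable d θhat).mul_const (-Real.log (w k0))).add
        (((gauss_moment d θhat (θs k0)).add (gauss_moment d θhat θhat)).div_const 2))
      ?_ (Filter.Eventually.of_forall hBbound)
    apply Continuous.aestronglyMeasurable
    exact (gauss_continuous d θhat).mul
      (Continuous.log ((gauss_continuous d θhat).div hmixcont fun y => (hmixpos y).ne')
        fun y => (div_pos (gaussPDF_pos d θhat y) (hmixpos y)).ne')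
  -- the comparison function
  have intpm : Integrable (fun y : Fin d → ℝ =>
      ∑ k, (w k * Real.exp
          (-(∑ j, (θhat j ^ 2 + θs k j ^ 2 - u j ^ 2 - (θhat j + θs k j - u j) ^ 2)) / 2))
        * gaussPDF d (fun j => θhat j + θs k j - u j) y) :=
    integrable_finset_sum _ fun k _ =>
      (gauss_integrable d (fun j => θhat j + θs k j - u j)).const_mul _
  have hpm : ∀ y : Fin d → ℝ,
      (∑ k, (w k * Real.exp
          (-(∑ j, (θhat j ^ 2 + θs k j ^ 2 - u j ^ 2 - (θhat j + θs k j - u j) ^ 2)) / 2))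
        * gaussPDF d (fun j => θhat j + θs k j - u j) y)
      = gaussPDF d θhat y * (∑ k, w k * gaussPDF d (θs k) y) / gaussPDF d u y := by
    intro y
    rw [Finset.mul_sum, Finset.sum_div]
    refine Finset.sum_congr rfl fun k _ => ?_
    rw [show gaussPDF d θhat y * (w k * gaussPDF d (θs k) y) / gaussPDF d u y
        = w k * (gaussPDF d θhat y * gaussPDF d (θs k) y / gaussPDF d u y) by ring,
      hkey k y]
    ring
  -- pointwise inequality
  have hpoint : ∀ y : Fin d → ℝ,
      gaussPDF d θhat y
        - (∑ k, (w k * Real.exp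
            (-(∑ j, (θhat j ^ 2 + θs k j ^ 2 - u j ^ 2 - (θhat j + θs k j - u j) ^ 2)) / 2))
          * gaussPDF d (fun j => θhat j + θs k j - u j) y)
      ≤ gaussPDF d θhat y * Real.log (gaussPDF d θhat y / ∑ k, w k * gaussPDF d (θs k) y)
        - gaussPDF d θhat y * Real.log (gaussPDF d θhat y / gaussPDF d u y) := by
    intro y
    have hp := gaussPDF_pos d θhat y
    have hq := gaussPDF_pos d u y
    have hM := hmixpos y
    have h1 : gaussPDF d θhat y * Real.log (gaussPDF d θhat y / ∑ k, w k * gaussPDF d (θs k) y)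
        - gaussPDF d θhat y * Real.log (gaussPDF d θhat y / gaussPDF d u y)
        = gaussPDF d θhat y
            * (Real.log (gaussPDF d u y) - Real.log (∑ k, w k * gaussPDF d (θs k) y)) := by
      rw [Real.log_div hp.ne' hM.ne', Real.log_div hp.ne' hq.ne']
      ring
    have h2 : Real.log (∑ k, w k * gaussPDF d (θs k) y) - Real.log (gaussPDF d u y)
        ≤ (∑ k, w k * gaussPDF d (θs k) y) / gaussPDF d u y - 1 := by
      have h := Real.log_le_sub_one_of_pos (div_pos hM hq)
      rwa [Real.log_div hM.ne' hq.ne'] at h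
    have h3 : gaussPDF d θhat y
        - (∑ k, (w k * Real.exp
            (-(∑ j, (θhat j ^ 2 + θs k j ^ 2 - u j ^ 2 - (θhat j + θs k j - u j) ^ 2)) / 2))
          * gaussPDF d (fun j => θhat j + θs k j - u j) y)
        = gaussPDF d θhat y
            * (1 - (∑ k, w k * gaussPDF d (θs k) y) / gaussPDF d u y) := by
      rw [hpm y]
      field_simp
    rw [h1, h3]
    apply mul_le_mul_of_nonneg_left _ hp.le
    linarith
  -- integral of the comparison function
  have hZnn : 0 ≤ ∫ y : Fin d → ℝ, gaussPDF d θhat y :=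
    integral_nonneg fun y => (gaussPDF_pos d θhat y).le
  have hintpm_le :
      (∫ y : Fin d → ℝ, ∑ k, (w k * Real.exp
          (-(∑ j, (θhat j ^ 2 + θs k j ^ 2 - u j ^ 2 - (θhat j + θs k j - u j) ^ 2)) / 2))
        * gaussPDF d (fun j => θhat j + θs k j - u j) y)
      ≤ ∫ y : Fin d → ℝ, gaussPDF d θhat y := by
    rw [integral_finset_sum _ (fun k _ =>
      (gauss_integrable d (fun j => θhat j + θs k j - u j)).const_mul _)]
    have hrw : ∀ k : Fin K,
        (∫ y : Fin d → ℝ, (w k * Real.exp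
            (-(∑ j, (θhat j ^ 2 + θs k j ^ 2 - u j ^ 2 - (θhat j + θs k j - u j) ^ 2)) / 2))
          * gaussPDF d (fun j => θhat j + θs k j - u j) y)
        = (w k * Real.exp
            (-(∑ j, (θhat j ^ 2 + θs k j ^ 2 - u j ^ 2 - (θhat j + θs k j - u j) ^ 2)) / 2))
          * ∫ y : Fin d → ℝ, gaussPDF d θhat y := by
      intro k
      rw [integral_const_mul, gauss_integral_const d (fun j => θhat j + θs k j - u j) θhat]
    rw [Finset.sum_congr rfl fun k _ => hrw k, ← Finset.sum_mul]
    calc (∑ k, w k * Real.exp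
            (-(∑ j, (θhat j ^ 2 + θs k j ^ 2 - u j ^ 2 - (θhat j + θs k j - u j) ^ 2)) / 2))
          * ∫ y : Fin d → ℝ, gaussPDF d θhat y
        ≤ 1 * ∫ y : Fin d → ℝ, gaussPDF d θhat y := by
          apply mul_le_mul_of_nonneg_right _ hZnn
          calc ∑ k, w k * Real.exp
                (-(∑ j, (θhat j ^ 2 + θs k j ^ 2 - u j ^ 2 - (θhat j + θs k j - u j) ^ 2)) / 2)
              ≤ ∑ k, w k * 1 :=
                Finset.sum_le_sum fun k _ =>
                  mul_le_mul_of_nonneg_left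
                    (Real.exp_le_one_iff.2 (by linarith [hcnn k])) (hw k).le
            _ = 1 := by simpa using hwsum
      _ = ∫ y : Fin d → ℝ, gaussPDF d θhat y := one_mul _
  -- conclusion
  have hmono : (∫ y : Fin d → ℝ, (gaussPDF d θhat y
        - ∑ k, (w k * Real.exp
            (-(∑ j, (θhat j ^ 2 + θs k j ^ 2 - u j ^ 2 - (θhat j + θs k j - u j) ^ 2)) / 2))
          * gaussPDF d (fun j => θhat j + θs k j - u j) y))
      ≤ ∫ y : Fin d → ℝ,
          (gaussPDF d θhat y * Real.log (gaussPDF d θhat y / ∑ k, w k * gaussPDF d (θs k) y)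
            - gaussPDF d θhat y * Real.log (gaussPDF d θhat y / gaussPDF d u y)) :=
    integral_mono ((gauss_integrable d θhat).sub intpm) (intB.sub intA) hpoint
  have e1 : (∫ y : Fin d → ℝ, (gaussPDF d θhat y
        - ∑ k, (w k * Real.exp
            (-(∑ j, (θhat j ^ 2 + θs k j ^ 2 - u j ^ 2 - (θhat j + θs k j - u j) ^ 2)) / 2))
          * gaussPDF d (fun j => θhat j + θs k j - u j) y))
      = (∫ y : Fin d → ℝ, gaussPDF d θhat y)
        - ∫ y : Fin d → ℝ, ∑ k, (w k * Real.exp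
            (-(∑ j, (θhat j ^ 2 + θs k j ^ 2 - u j ^ 2 - (θhat j + θs k j - u j) ^ 2)) / 2))
          * gaussPDF d (fun j => θhat j + θs k j - u j) y :=
    integral_sub (gauss_integrable d θhat) intpm
  have e2 : (∫ y : Fin d → ℝ,
        (gaussPDF d θhat y * Real.log (gaussPDF d θhat y / ∑ k, w k * gaussPDF d (θs k) y)
          - gaussPDF d θhat y * Real.log (gaussPDF d θhat y / gaussPDF d u y)))
      = (∫ y : Fin d → ℝ,
          gaussPDF d θhat y * Real.log (gaussPDF d θhat y / ∑ k, w k * gaussPDF d (θs k) y))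
        - ∫ y : Fin d → ℝ,
            gaussPDF d θhat y * Real.log (gaussPDF d θhat y / gaussPDF d u y) :=
    integral_sub intB intA
  rw [e1] at hmono
  rw [e2] at hmono
  linarith
end
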